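/- Let φ be a Schwartz function on ℝⁿ, A symmetric positive definite, b ∈ ℝⁿ, c ∈ ℝ. Define u(x,t) = ∫_{ℝⁿ} G(x-y,t)φ(y)dy where G(x,t) = e^{ct}/((2√(πt))ⁿ det(A^{1/2})) exp(-|A^{-1/2}(x+tb)|²/(4t)). Then the Fourier transform of u(·,t) in x equals φ̂(ξ) · exp({-(Aξ,ξ) + i(b,ξ) + c}t) for all ξ ∈ ℝⁿ and t > 0. -/

import Mathlib

open MeasureTheory Real Matrix

/-- The fundamental solution `G(x,t)`; `S` plays the role of `A^{1/2}`. -/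
noncomputable def fundSol (n : ℕ) (S : Matrix (Fin n) (Fin n) ℝ) (b : Fin n → ℝ) (c : ℝ)
    (x : Fin n → ℝ) (t : ℝ) : ℝ :=
  Real.exp (c * t) / ((2 * Real.sqrt (π * t)) ^ n * S.det) *
    Real.exp (-(S⁻¹.mulVec (x + t • b) ⬝ᵥ S⁻¹.mulVec (x + t • b)) / (4 * t))

/-!
Substituting `x = S w - t b` turns `G(·, t)` into the Gaussian `C e^{-|w|²/4t}`, whose Fourier
transform is again a Gaussian; the shift contributes the factor `e^{i(b,ξ)t}`, and
`|Sξ|² = (Aξ, ξ)`. The normalising constant of `G` is chosen so that `Ĝ(0) = e^{ct}`. Fubini and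
translation invariance then give `(G * φ)^ = Ĝ φ̂` for the unnormalised transforms, and the
factor `(2π)^{-n/2}` rides along.
-/

open scoped Complex

theorem integral_mul_convolution_eq_mul {G : Type*} [AddCommGroup G] [MeasurableSpace G]
    [MeasurableAdd₂ G] [MeasurableNeg G] {μ : Measure G} [SFinite μ] [μ.IsAddRightInvariant]
    {e : G → ℂ} (he_meas : Measurable e) (he_norm : ∀ x, ‖e x‖ ≤ 1)
    (he_add : ∀ x y, e (x + y) = e x * e y) {f g : G → ℂ} (hf : Integrable f μ)
    (hg : Integrable g μ) :
    ∫ x, e x * ∫ y, f (x - y) * g y ∂μ ∂μ = (∫ x, e x * f x ∂μ) * ∫ y, e y * g y ∂μ := by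
  have hint : Integrable (fun p : G × G => e p.1 * (f (p.1 - p.2) * g p.2)) (μ.prod μ) := by
    have hconv := hg.convolution_integrand (ContinuousLinearMap.mul ℂ ℂ) hf
    refine (hconv.bdd_mul (he_meas.comp measurable_fst).aestronglyMeasurable
      (.of_forall fun p => he_norm p.1)).congr (.of_forall fun p => ?_)
    simp only [Function.comp_apply, ContinuousLinearMap.mul_apply']
    ring
  calc ∫ x, e x * ∫ y, f (x - y) * g y ∂μ ∂μ
      = ∫ y, ∫ x, e x * (f (x - y) * g y) ∂μ ∂μ := by
        simp_rw [← integral_const_mul]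
        exact integral_integral_swap hint
    _ = ∫ y, ∫ x, (e y * g y) * (e x * f x) ∂μ ∂μ := by
        congr 1 with y
        rw [← integral_add_right_eq_self _ y]
        simp only [add_sub_cancel_right, he_add]
        congr 1 with x
        ring
    _ = (∫ x, e x * f x ∂μ) * ∫ y, e y * g y ∂μ := by
        simp_rw [integral_const_mul, integral_mul_const, mul_comm]

namespace Matrix

variable {ι : Type*} [Fintype ι] [DecidableEq ι] {S : Matrix ι ι ℝ}

theorem measurableEmbedding_mulVec (hS : IsUnit S.det) :
    MeasurableEmbedding (S *ᵥ · : (ι → ℝ) → ι → ℝ) :=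
  (toLinearEquiv' S (invertibleOfIsUnitDet S hS)).toContinuousLinearEquiv.toHomeomorph
    |>.measurableEmbedding

theorem map_mulVec_volume (hS : S.det ≠ 0) :
    Measure.map (S *ᵥ · : (ι → ℝ) → ι → ℝ) volume = ENNReal.ofReal |S.det⁻¹| • volume := by
  have h : LinearMap.det (toLin' S) ≠ 0 := by rwa [LinearMap.det_toLin']
  rw [show (S *ᵥ ·) = toLin' S from rfl, Measure.map_linearMap_addHaar_pi_eq_smul_addHaar h,
    LinearMap.det_toLin']

theorem integral_comp_mulVec {E : Type*} [NormedAddCommGroup E] [NormedSpace ℝ E]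
    (hS : S.det ≠ 0) (g : (ι → ℝ) → E) :
    ∫ w, g (S *ᵥ w) = |S.det⁻¹| • ∫ z, g z := by
  rw [← (measurableEmbedding_mulVec hS.isUnit).integral_map, map_mulVec_volume hS,
    integral_smul_measure, ENNReal.toReal_ofReal (abs_nonneg _)]

theorem integrable_comp_mulVec_iff {E : Type*} [NormedAddCommGroup E]
    (hS : S.det ≠ 0) {g : (ι → ℝ) → E} :
    Integrable (fun w => g (S *ᵥ w)) ↔ Integrable g := by
  rw [show (fun w => g (S *ᵥ w)) = g ∘ (S *ᵥ ·) from rfl,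
    ← (measurableEmbedding_mulVec hS.isUnit).integrable_map_iff, map_mulVec_volume hS,
    integrable_smul_measure (by simpa using hS) ENNReal.ofReal_ne_top]

end Matrix

theorem two_mul_sqrt_pow_eq_rpow {x : ℝ} (hx : 0 ≤ x) (n : ℕ) :
    (2 * √x) ^ n = (4 * x) ^ ((n : ℝ) / 2) := by
  have h2 : 2 * √x = √(4 * x) := by
    rw [sqrt_mul zero_le_four, show (4 : ℝ) = 2 ^ 2 by norm_num, sqrt_sq zero_le_two]
  rw [h2, sqrt_eq_rpow, ← rpow_mul_natCast (by positivity)]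
  ring_nf

section DotFourier

variable {ι : Type*} [Fintype ι]

theorem integrable_exp_neg_dotProduct_div {t : ℝ} (ht : 0 < t) :
    Integrable (fun w : ι → ℝ => rexp (-(w ⬝ᵥ w) / (4 * t))) := by
  have h : (fun w : ι → ℝ => rexp (-(w ⬝ᵥ w) / (4 * t)))
      = fun w => ∏ i, rexp (-(4 * t)⁻¹ * w i ^ 2) := by
    ext w
    rw [← Real.exp_sum]
    congr 1
    simp only [dotProduct, ← Finset.sum_neg_distrib, Finset.sum_div]
    refine Finset.sum_congr rfl fun i _ => ?_
    ring
  rw [h]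
  exact Integrable.fintype_prod fun _ => integrable_exp_neg_mul_sq (by positivity)

/-- The paper's `û(ξ)` without the factor `(2π)^{-n/2}`. -/
noncomputable def dotFourierIntegral (f : (ι → ℝ) → ℂ) (ξ : ι → ℝ) : ℂ :=
  ∫ x, cexp (-(Complex.I * ((x ⬝ᵥ ξ : ℝ) : ℂ))) * f x

theorem dotFourierIntegral_const_mul (a : ℂ) (f : (ι → ℝ) → ℂ) (ξ : ι → ℝ) :
    dotFourierIntegral (fun x => a * f x) ξ = a * dotFourierIntegral f ξ := by
  simp only [dotFourierIntegral, ← integral_const_mul, mul_left_comm]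

theorem dotFourierIntegral_convolution {f g : (ι → ℝ) → ℂ} (hf : Integrable f)
    (hg : Integrable g) (ξ : ι → ℝ) :
    dotFourierIntegral (fun x => ∫ y, f (x - y) * g y) ξ
      = dotFourierIntegral f ξ * dotFourierIntegral g ξ := by
  refine integral_mul_convolution_eq_mul (by fun_prop) (fun x => ?_) (fun x y => ?_) hf hg
  · rw [Complex.norm_exp]
    simp
  · rw [← Complex.exp_add, add_dotProduct]
    push_cast
    ring_nf

theorem dotFourierIntegral_gaussian {t : ℝ} (ht : 0 < t) (η : ι → ℝ) :
    dotFourierIntegral (fun w => (rexp (-(w ⬝ᵥ w) / (4 * t)) : ℂ)) η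
      = ((2 * √(π * t)) ^ Fintype.card ι : ℝ) * cexp (-(t * (η ⬝ᵥ η : ℝ))) := by
  have hb : 0 < ((4 * t)⁻¹ : ℂ).re := by norm_cast; positivity
  have h := GaussianFourier.integral_cexp_neg_mul_sum_add hb (fun i => -(Complex.I * η i))
  simp only [dotFourierIntegral]
  convert h using 1
  · congr 1 with w
    rw [Complex.ofReal_exp, ← Complex.exp_add]
    congr 1
    push_cast [dotProduct]
    simp only [Finset.mul_sum, neg_div, Finset.sum_div, ← Finset.sum_neg_distrib,
      ← Finset.sum_add_distrib]
    refine Finset.sum_congr rfl fun i _ => ?_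
    ring
  · congr 1
    · rw [show (π : ℂ) / (4 * (t : ℂ))⁻¹ = ((4 * (π * t) : ℝ) : ℂ) by push_cast; field_simp,
        show (Fintype.card ι : ℂ) / 2 = ((Fintype.card ι / 2 : ℝ) : ℂ) by push_cast; rfl,
        ← Complex.ofReal_cpow (by positivity), two_mul_sqrt_pow_eq_rpow (by positivity)]
    · congr 1
      push_cast [dotProduct]
      simp only [Finset.mul_sum, Finset.sum_div, ← Finset.sum_neg_distrib]
      refine Finset.sum_congr rfl fun i _ => ?_
      rw [neg_sq, mul_pow, Complex.I_sq]
      field_simp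

variable [DecidableEq ι]

theorem dotFourierIntegral_comp_affine {S : Matrix ι ι ℝ} (hS : IsUnit S.det)
    (f : (ι → ℝ) → ℂ) (v ξ : ι → ℝ) :
    dotFourierIntegral (fun z => f (S⁻¹ *ᵥ (z + v))) ξ
      = |S.det| * cexp (Complex.I * ((v ⬝ᵥ ξ : ℝ) : ℂ)) * dotFourierIntegral f (Sᵀ *ᵥ ξ) := by
  set F := fun z => cexp (-(Complex.I * ((z ⬝ᵥ ξ : ℝ) : ℂ))) * f (S⁻¹ *ᵥ (z + v))
  have hsubst : ∫ z, F z = |S.det| • ∫ w, F (S *ᵥ w - v) := by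
    rw [integral_comp_mulVec hS.ne_zero (fun z => F (z - v)), integral_sub_right_eq_self,
      smul_smul, abs_inv, mul_inv_cancel₀ (abs_ne_zero.2 hS.ne_zero), one_smul]
  have hpt : ∀ w, F (S *ᵥ w - v) = cexp (Complex.I * ((v ⬝ᵥ ξ : ℝ) : ℂ)) *
      (cexp (-(Complex.I * ((w ⬝ᵥ Sᵀ *ᵥ ξ : ℝ) : ℂ))) * f w) := fun w => by
    have hdot : (S *ᵥ w - v) ⬝ᵥ ξ = w ⬝ᵥ Sᵀ *ᵥ ξ - v ⬝ᵥ ξ := by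
      rw [sub_dotProduct, dotProduct_comm, dotProduct_mulVec, mulVec_transpose, dotProduct_comm]
    simp only [F, sub_add_cancel, mulVec_mulVec, nonsing_inv_mul S hS, one_mulVec, hdot,
      ← mul_assoc, ← Complex.exp_add]
    congr 2
    push_cast
    ring
  simp only [dotFourierIntegral]
  rw [hsubst, Complex.real_smul]
  simp_rw [hpt, integral_const_mul, mul_assoc]

end DotFourier

section FundSol

variable {n : ℕ} {S : Matrix (Fin n) (Fin n) ℝ} {b : Fin n → ℝ} {c t : ℝ}

theorem integrable_fundSol (hS : S.det ≠ 0) (ht : 0 < t) :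
    Integrable (fun x => fundSol n S b c x t) := by
  have hSinv : S⁻¹.det ≠ 0 := by simpa [det_nonsing_inv] using hS
  have hgauss := (integrable_comp_mulVec_iff hSinv).2 (integrable_exp_neg_dotProduct_div ht)
  exact (hgauss.comp_add_right (t • b)).const_mul _

theorem dotFourierIntegral_fundSol (hS : S.PosDef) (ht : 0 < t) (ξ : Fin n → ℝ) :
    dotFourierIntegral (fun x => (fundSol n S b c x t : ℂ)) ξ
      = cexp ((-(((S * S) *ᵥ ξ ⬝ᵥ ξ : ℝ) : ℂ) + Complex.I * ((b ⬝ᵥ ξ : ℝ) : ℂ) + c) * t) := by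
  have hdet := hS.det_pos
  have hsymm : Sᵀ = S := by simpa using hS.isHermitian.eq
  have hquad : S *ᵥ ξ ⬝ᵥ S *ᵥ ξ = (S * S) *ᵥ ξ ⬝ᵥ ξ := by
    rw [dotProduct_mulVec, ← mulVec_transpose, hsymm, mulVec_mulVec, dotProduct_comm]
  simp only [fundSol, Complex.ofReal_mul]
  rw [dotFourierIntegral_const_mul,
    dotFourierIntegral_comp_affine hdet.ne'.isUnit (fun w => (rexp (-(w ⬝ᵥ w) / (4 * t)) : ℂ)),
    dotFourierIntegral_gaussian ht, hsymm, hquad, Fintype.card_fin, abs_of_pos hdet,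
    smul_dotProduct, smul_eq_mul]
  have hconst : rexp (c * t) / ((2 * √(π * t)) ^ n * S.det) * S.det * (2 * √(π * t)) ^ n
      = rexp (c * t) := by
    field_simp
  calc _ = ((rexp (c * t) / ((2 * √(π * t)) ^ n * S.det) * S.det * (2 * √(π * t)) ^ n : ℝ) : ℂ)
        * (cexp (Complex.I * ((t * b ⬝ᵥ ξ : ℝ) : ℂ))
          * cexp (-(t * (((S * S) *ᵥ ξ ⬝ᵥ ξ : ℝ) : ℂ)))) := by
        push_cast
        ring
    _ = _ := by
        rw [hconst, Complex.ofReal_exp, ← Complex.exp_add, ← Complex.exp_add]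
        congr 1
        push_cast
        ring

end FundSol

theorem fourier_transform_solution_general (n : ℕ) (A S : Matrix (Fin n) (Fin n) ℝ)
    (hS : S.PosDef) (hSA : S * S = A)
    (b : Fin n → ℝ) (c : ℝ) (φ : SchwartzMap (Fin n → ℝ) ℝ)
    (ξ : Fin n → ℝ) (t : ℝ) (ht : 0 < t) :
    ((2 * π : ℝ) ^ (-(n : ℝ) / 2) : ℝ) *
        (∫ x : Fin n → ℝ, Complex.exp (-(Complex.I * ((x ⬝ᵥ ξ : ℝ) : ℂ))) *
          ((∫ y : Fin n → ℝ, fundSol n S b c (x - y) t * φ y : ℝ) : ℂ)) =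
      (((2 * π : ℝ) ^ (-(n : ℝ) / 2) : ℝ) *
          (∫ x : Fin n → ℝ, Complex.exp (-(Complex.I * ((x ⬝ᵥ ξ : ℝ) : ℂ))) * (φ x : ℂ))) *
        Complex.exp ((-((A.mulVec ξ ⬝ᵥ ξ : ℝ) : ℂ) + Complex.I * ((b ⬝ᵥ ξ : ℝ) : ℂ) + (c : ℂ))
          * (t : ℂ)) := by
  have hconv : (fun x => ((∫ y, fundSol n S b c (x - y) t * φ y : ℝ) : ℂ))
      = fun x => ∫ y, (fundSol n S b c (x - y) t : ℂ) * (φ y : ℂ) := by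
    ext x
    rw [← integral_complex_ofReal]
    push_cast
    rfl
  have hfourier := dotFourierIntegral_convolution (f := fun x => (fundSol n S b c x t : ℂ))
    (g := fun x => (φ x : ℂ)) (integrable_fundSol hS.det_pos.ne' ht).ofReal φ.integrable.ofReal ξ
  rw [dotFourierIntegral_fundSol hS ht, hSA] at hfourier
  change _ * dotFourierIntegral (fun x => ((∫ y, fundSol n S b c (x - y) t * φ y : ℝ) : ℂ)) ξ
    = _ * dotFourierIntegral (fun x => (φ x : ℂ)) ξ * _
  rw [hconv, hfourier]
  ring

/-- For Schwartz `φ`, the Fourier transform (with normalization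
`û(ξ) = (2π)^{-n/2}∫ e^{-i(x,ξ)}u(x)dx`) of `u(·,t) = G(·,t) * φ` equals
`φ̂(ξ) · exp({-(Aξ,ξ) + i(b,ξ) + c}t)`. -/
theorem fourier_transform_solution (n : ℕ) (A S : Matrix (Fin n) (Fin n) ℝ)
    (hAsymm : A.IsSymm) (hA : A.PosDef) (hS : S.PosDef) (hSA : S * S = A)
    (b : Fin n → ℝ) (c : ℝ) (φ : SchwartzMap (Fin n → ℝ) ℝ)
    (ξ : Fin n → ℝ) (t : ℝ) (ht : 0 < t) :
    ((2 * π : ℝ) ^ (-(n : ℝ) / 2) : ℝ) *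
        (∫ x : Fin n → ℝ, Complex.exp (-(Complex.I * ((x ⬝ᵥ ξ : ℝ) : ℂ))) *
          ((∫ y : Fin n → ℝ, fundSol n S b c (x - y) t * φ y : ℝ) : ℂ)) =
      (((2 * π : ℝ) ^ (-(n : ℝ) / 2) : ℝ) *
          (∫ x : Fin n → ℝ, Complex.exp (-(Complex.I * ((x ⬝ᵥ ξ : ℝ) : ℂ))) * (φ x : ℂ))) *
        Complex.exp ((-((A.mulVec ξ ⬝ᵥ ξ : ℝ) : ℂ) + Complex.I * ((b ⬝ᵥ ξ : ℝ) : ℂ) + (c : ℂ))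
          * (t : ℂ)) :=
  fourier_transform_solution_general n A S hS hSA b c φ ξ t ht
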